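/- Let ρ = p|ψ_n⟩⟨ψ_n| + (1−p)|GHZ_n⟩⟨GHZ_n| with 0 < p < 1. The range of ρ is the two-dimensional span of {|ψ_n⟩, |GHZ_n⟩}, and the only product-across-some-bipartition (biproduct) pure states in this span are the scalar multiples of |ψ_n⟩. Consequently ρ is genuinely multipartite entangled. -/
import Mathlib

set_option linter.unusedSectionVars false

open scoped Matrix ComplexOrder

noncomputable section

namespace Stmt5

/-- `|ψ_n⟩ = (|10⋯0⟩ + |01⋯0⟩)/√2`. -/
def psiVec (n : ℕ) : (Fin n → Fin 2) → ℂ := fun f =>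
  if f = (fun (i : Fin n) => if (i : ℕ) = 0 then (1 : Fin 2) else 0) ∨
     f = (fun (i : Fin n) => if (i : ℕ) = 1 then (1 : Fin 2) else 0) then
    ((Real.sqrt 2)⁻¹ : ℝ) else 0

/-- `|GHZ_n⟩ = (|0⋯0⟩ + |1⋯1⟩)/√2`. -/
def ghzVec (n : ℕ) : (Fin n → Fin 2) → ℂ := fun f =>
  if f = (fun _ => 0) ∨ f = (fun _ => 1) then ((Real.sqrt 2)⁻¹ : ℝ) else 0

/-- A pure state vector is biproduct if it factorizes across some nonempty proper
bipartition `S | S̄`. -/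
def Biproduct {n : ℕ} (φ : (Fin n → Fin 2) → ℂ) : Prop :=
  ∃ S : Finset (Fin n), S ≠ ∅ ∧ S ≠ Finset.univ ∧
    ∃ (a : ({i // i ∈ S} → Fin 2) → ℂ) (b : ({i // i ∉ S} → Fin 2) → ℂ),
      φ = fun f => a (fun i => f i) * b (fun i => f i)

/-- A mixed state is biseparable if it is a convex combination of biproduct pure
states; otherwise it is genuinely multipartite entangled. -/
def Bisep {n : ℕ} (ρ : Matrix (Fin n → Fin 2) (Fin n → Fin 2) ℂ) : Prop :=
  ∃ (k : ℕ) (w : Fin k → ℝ) (v : Fin k → (Fin n → Fin 2) → ℂ),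
    (∀ j, 0 ≤ w j) ∧ (∀ j, Biproduct (v j)) ∧
    ρ = ∑ j, (w j : ℂ) • Matrix.vecMulVec (v j) (star (v j))

/-! ### Auxiliary general lemmas -/

lemma sum_pair_ind {X : Type*} [Fintype X] [DecidableEq X] {a b : X} (hab : a ≠ b) (h : X → ℂ) :
    (∑ f : X, if f = a ∨ f = b then h f else 0) = h a + h b := by
  classical
  have : ∀ f : X, (if f = a ∨ f = b then h f else 0)
      = if f ∈ ({a, b} : Finset X) then h f else 0 := by
    intro f; simp [Finset.mem_insert]
  simp only [this]
  rw [Finset.sum_ite_mem, Finset.univ_inter, Finset.sum_pair hab]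

lemma vecMulVec_mulVec {m : Type*} [Fintype m] (v w x : m → ℂ) :
    (Matrix.vecMulVec v w).mulVec x = (w ⬝ᵥ x) • v := by
  funext i
  simp only [Matrix.mulVec, Matrix.vecMulVec_apply, dotProduct, Pi.smul_apply,
    smul_eq_mul, Finset.sum_mul, Finset.mul_sum]
  exact Finset.sum_congr rfl fun j _ => by ring

lemma sum_mulVec' {m k : Type*} [Fintype m] [Fintype k] (M : k → Matrix m m ℂ) (x : m → ℂ) :
    (∑ j, M j).mulVec x = ∑ j, (M j).mulVec x := by
  funext i
  simp only [Matrix.mulVec, dotProduct, Finset.sum_apply, Matrix.sum_apply,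
    Finset.sum_mul]
  rw [Finset.sum_comm]

lemma dotProduct_sum' {m k : Type*} [Fintype m] [Fintype k] (u : m → ℂ) (f : k → m → ℂ) :
    u ⬝ᵥ (∑ j, f j) = ∑ j, u ⬝ᵥ f j := by
  simp only [dotProduct, Finset.sum_apply, Finset.mul_sum]
  rw [Finset.sum_comm]

lemma dot_conj {m : Type*} [Fintype m] (a b : m → ℂ) :
    star a ⬝ᵥ b = starRingEnd ℂ (star b ⬝ᵥ a) := by
  simp [dotProduct, map_sum, mul_comm]

lemma eq_zero_of_star_dot_self {m : Type*} [Fintype m] (u : m → ℂ)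
    (h : star u ⬝ᵥ u = 0) : u = 0 := by
  have h1 : star u ⬝ᵥ u = ((∑ i, Complex.normSq (u i) : ℝ) : ℂ) := by
    push_cast
    refine Finset.sum_congr rfl fun i _ => ?_
    rw [Pi.star_apply, mul_comm]
    exact Complex.mul_conj (u i)
  rw [h1] at h
  have h2 : (∑ i, Complex.normSq (u i)) = 0 := by exact_mod_cast h
  funext i
  have := (Finset.sum_eq_zero_iff_of_nonneg
    (fun i _ => Complex.normSq_nonneg (u i))).mp h2 i (Finset.mem_univ i)
  simpa using Complex.normSq_eq_zero.mp this

/-! ### Basic facts about the two vectors -/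

section basic
variable {n : ℕ} (hn : 3 ≤ n)

def E0 (n : ℕ) : Fin n → Fin 2 := fun i => if (i : ℕ) = 0 then 1 else 0
def E1 (n : ℕ) : Fin n → Fin 2 := fun i => if (i : ℕ) = 1 then 1 else 0
def Z (n : ℕ) : Fin n → Fin 2 := fun _ => 0
def O (n : ℕ) : Fin n → Fin 2 := fun _ => 1

def c0 : ℂ := ((Real.sqrt 2)⁻¹ : ℝ)

lemma c0_ne : c0 ≠ 0 := by
  simp only [c0, ne_eq, Complex.ofReal_eq_zero, inv_eq_zero]
  positivity

lemma c0_sq : c0 * c0 = (2 : ℂ)⁻¹ := by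
  rw [c0, ← Complex.ofReal_mul, ← mul_inv, Real.mul_self_sqrt (by norm_num)]
  norm_num

lemma psi_apply (f : Fin n → Fin 2) :
    psiVec n f = if f = E0 n ∨ f = E1 n then c0 else 0 := rfl

lemma ghz_apply (f : Fin n → Fin 2) :
    ghzVec n f = if f = Z n ∨ f = O n then c0 else 0 := rfl

include hn

lemma h0n : 0 < n := by omega
lemma h1n : 1 < n := by omega
lemma h2n : 2 < n := by omega

lemma E0_ne_E1 : E0 n ≠ E1 n := fun h => by
  have := congrFun h ⟨0, h0n hn⟩; simp [E0, E1] at this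

lemma Z_ne_O : Z n ≠ O n := fun h => by
  have := congrFun h ⟨0, h0n hn⟩; simp [Z, O] at this

lemma E0_ne_Z : E0 n ≠ Z n := fun h => by
  have := congrFun h ⟨0, h0n hn⟩; simp [E0, Z] at this

lemma E1_ne_Z : E1 n ≠ Z n := fun h => by
  have := congrFun h ⟨1, h1n hn⟩; simp [E1, Z] at this

lemma E0_ne_O : E0 n ≠ O n := fun h => by
  have := congrFun h ⟨1, h1n hn⟩; simp [E0, O] at this

lemma E1_ne_O : E1 n ≠ O n := fun h => by
  have := congrFun h ⟨0, h0n hn⟩; simp [E1, O] at this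

lemma psi_Z : psiVec n (Z n) = 0 := by
  rw [psi_apply, if_neg]
  exact fun h => h.elim (fun h => E0_ne_Z hn h.symm) (fun h => E1_ne_Z hn h.symm)

lemma psi_O : psiVec n (O n) = 0 := by
  rw [psi_apply, if_neg]
  exact fun h => h.elim (fun h => E0_ne_O hn h.symm) (fun h => E1_ne_O hn h.symm)

lemma ghz_Z : ghzVec n (Z n) = c0 := by rw [ghz_apply, if_pos (Or.inl rfl)]

lemma ghz_O : ghzVec n (O n) = c0 := by rw [ghz_apply, if_pos (Or.inr rfl)]

lemma dot_psi_psi : star (psiVec n) ⬝ᵥ psiVec n = 1 := by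
  have : ∀ f, star (psiVec n) f * psiVec n f
      = if f = E0 n ∨ f = E1 n then c0 * c0 else 0 := by
    intro f
    simp only [Pi.star_apply, psi_apply, apply_ite (star : ℂ → ℂ), star_zero]
    split <;> simp [c0]
  rw [dotProduct]
  simp only [this]
  rw [sum_pair_ind (E0_ne_E1 hn), c0_sq]
  norm_num

lemma dot_ghz_ghz : star (ghzVec n) ⬝ᵥ ghzVec n = 1 := by
  have : ∀ f, star (ghzVec n) f * ghzVec n f
      = if f = Z n ∨ f = O n then c0 * c0 else 0 := by
    intro f
    simp only [Pi.star_apply, ghz_apply, apply_ite (star : ℂ → ℂ), star_zero]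
    split <;> simp [c0]
  rw [dotProduct]
  simp only [this]
  rw [sum_pair_ind (Z_ne_O hn), c0_sq]
  norm_num

lemma dot_psi_ghz : star (psiVec n) ⬝ᵥ ghzVec n = 0 := by
  have : ∀ f, star (psiVec n) f * ghzVec n f
      = if f = E0 n ∨ f = E1 n then (star c0) * ghzVec n f else 0 := by
    intro f
    simp only [Pi.star_apply, psi_apply, apply_ite (star : ℂ → ℂ), star_zero]
    split <;> simp
  rw [dotProduct]
  simp only [this]
  rw [sum_pair_ind (E0_ne_E1 hn)]
  rw [ghz_apply, ghz_apply, if_neg, if_neg]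
  · ring
  · exact fun h => h.elim (E1_ne_Z hn) (E1_ne_O hn)
  · exact fun h => h.elim (E0_ne_Z hn) (E0_ne_O hn)

lemma dot_ghz_psi : star (ghzVec n) ⬝ᵥ psiVec n = 0 := by
  have : ∀ f, star (ghzVec n) f * psiVec n f
      = if f = Z n ∨ f = O n then (star c0) * psiVec n f else 0 := by
    intro f
    simp only [Pi.star_apply, ghz_apply, apply_ite (star : ℂ → ℂ), star_zero]
    split <;> simp
  rw [dotProduct]
  simp only [this]
  rw [sum_pair_ind (Z_ne_O hn)]
  rw [psi_apply, psi_apply, if_neg, if_neg]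
  · ring
  · exact fun h => h.elim (fun h => E0_ne_O hn h.symm) (fun h => E1_ne_O hn h.symm)
  · exact fun h => h.elim (fun h => E0_ne_Z hn h.symm) (fun h => E1_ne_Z hn h.symm)

lemma ghz_ne_zero : ghzVec n ≠ 0 := fun h => by
  have := congrFun h (Z n)
  rw [ghz_apply, if_pos (Or.inl rfl)] at this
  exact c0_ne this

/-! ### Biproduct states in the span -/

lemma biproduct_span (φ : (Fin n → Fin 2) → ℂ)
    (hφ : φ ∈ Submodule.span ℂ ({psiVec n, ghzVec n} : Set ((Fin n → Fin 2) → ℂ)))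
    (hb : Biproduct φ) : ∃ a : ℂ, φ = a • psiVec n := by
  classical
  rw [Submodule.mem_span_pair] at hφ
  obtain ⟨a, b, hab⟩ := hφ
  obtain ⟨S, hSne, hSuniv, A, B, hfac⟩ := hb
  obtain ⟨i₀, hi₀⟩ := Finset.nonempty_iff_ne_empty.mpr hSne
  obtain ⟨i₁, hi₁⟩ : ∃ i, i ∉ S := by
    by_contra h
    push_neg at h
    exact hSuniv (Finset.eq_univ_iff_forall.mpr h)
  set g : Fin n → Fin 2 := fun i => if i ∈ S then 0 else 1 with hg
  set g' : Fin n → Fin 2 := fun i => if i ∈ S then 1 else 0 with hg'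
  -- the four factorized values
  have hZv : φ (Z n) = A (fun _ => 0) * B (fun _ => 0) := by rw [hfac]; rfl
  have hOv : φ (O n) = A (fun _ => 1) * B (fun _ => 1) := by rw [hfac]; rfl
  have hGv : φ g = A (fun _ => 0) * B (fun _ => 1) := by
    simp only [hfac]
    have h1 : (fun i : {i // i ∈ S} => g i) = fun _ => (0 : Fin 2) := by
      funext i; simp [hg, i.2]
    have h2 : (fun i : {i // i ∉ S} => g i) = fun _ => (1 : Fin 2) := by
      funext i; simp [hg, i.2]
    rw [h1, h2]
  have hG'v : φ g' = A (fun _ => 1) * B (fun _ => 0) := by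
    simp only [hfac]
    have h1 : (fun i : {i // i ∈ S} => g' i) = fun _ => (1 : Fin 2) := by
      funext i; simp [hg', i.2]
    have h2 : (fun i : {i // i ∉ S} => g' i) = fun _ => (0 : Fin 2) := by
      funext i; simp [hg', i.2]
    rw [h1, h2]
  have key : φ (Z n) * φ (O n) = φ g * φ g' := by
    rw [hZv, hOv, hGv, hG'v]; ring
  -- ghz vanishes at g and g'
  have hgZ : g ≠ Z n := fun h => by
    have := congrFun h i₁; simp [hg, hi₁, Z] at this
  have hgO : g ≠ O n := fun h => by
    have := congrFun h i₀; simp [hg, hi₀, O] at this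
  have hg'Z : g' ≠ Z n := fun h => by
    have := congrFun h i₀; simp [hg', hi₀, Z] at this
  have hg'O : g' ≠ O n := fun h => by
    have := congrFun h i₁; simp [hg', hi₁, O] at this
  have hGg : ghzVec n g = 0 := by
    rw [ghz_apply, if_neg]; exact fun h => h.elim hgZ hgO
  have hGg' : ghzVec n g' = 0 := by
    rw [ghz_apply, if_neg]; exact fun h => h.elim hg'Z hg'O
  -- psi vanishes at g or at g'
  have hpsi : psiVec n g = 0 ∨ psiVec n g' = 0 := by
    by_cases hcase : g = E0 n ∨ g = E1 n
    · right
      rw [psi_apply, if_neg]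
      rintro (h | h) <;> {
        set i2 : Fin n := ⟨2, h2n hn⟩ with hi2
        have hgz : g i2 = 0 := by
          rcases hcase with hc | hc <;>
            · have := congrFun hc i2; simpa [E0, E1, hi2] using this
        have hg'z : g' i2 = 0 := by
          have := congrFun h i2; simpa [E0, E1, hi2] using this
        by_cases hmem : i2 ∈ S
        · rw [hg'] at hg'z; simp [hmem] at hg'z
        · rw [hg] at hgz; simp [hmem] at hgz }
    · left
      rw [psi_apply, if_neg hcase]
  -- hence φ g * φ g' = 0
  have hzero : φ g * φ g' = 0 := by
    have e1 : φ g = a * psiVec n g := by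
      rw [← hab]; simp [hGg]
    have e2 : φ g' = a * psiVec n g' := by
      rw [← hab]; simp [hGg']
    rw [e1, e2]
    rcases hpsi with h | h <;> rw [h] <;> ring
  -- compute φ at Z and O
  have eZ : φ (Z n) = b * c0 := by
    rw [← hab]; simp [psi_Z hn, ghz_Z hn]
  have eO : φ (O n) = b * c0 := by
    rw [← hab]; simp [psi_O hn, ghz_O hn]
  have hb0 : b = 0 := by
    rw [eZ, eO, hzero] at key
    rcases mul_eq_zero.mp key with h | h <;>
      exact (mul_eq_zero.mp h).elim id (fun h => absurd h c0_ne)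
  refine ⟨a, ?_⟩
  rw [← hab, hb0, zero_smul, add_zero]

end basic

/-! ### Main theorem -/

/-- for `ρ = p|ψ_n⟩⟨ψ_n| + (1−p)|GHZ_n⟩⟨GHZ_n|` with `0 < p < 1`, the range
of `ρ` is the span of `{|ψ_n⟩, |GHZ_n⟩}`, the only biproduct pure states in this span are
the scalar multiples of `|ψ_n⟩`, and consequently `ρ` is genuinely multipartite
entangled. -/
theorem range_and_genuine_entanglement
    (n : ℕ) (hn : 3 ≤ n) (p : ℝ) (hp0 : 0 < p) (hp1 : p < 1)
    (ρ : Matrix (Fin n → Fin 2) (Fin n → Fin 2) ℂ)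
    (hρ : ρ = (p : ℂ) • Matrix.vecMulVec (psiVec n) (star (psiVec n)) +
      ((1 - p : ℝ) : ℂ) • Matrix.vecMulVec (ghzVec n) (star (ghzVec n))) :
    LinearMap.range (Matrix.toLin' ρ) = Submodule.span ℂ {psiVec n, ghzVec n} ∧
    (∀ φ ∈ Submodule.span ℂ ({psiVec n, ghzVec n} : Set ((Fin n → Fin 2) → ℂ)),
      Biproduct φ → ∃ a : ℂ, φ = a • psiVec n) ∧
    ¬ Bisep ρ := by
  have hpC : (p : ℂ) ≠ 0 := Complex.ofReal_ne_zero.mpr hp0.ne'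
  have hqC : ((1 - p : ℝ) : ℂ) ≠ 0 :=
    Complex.ofReal_ne_zero.mpr (by intro h; linarith [h] : (1 - p : ℝ) ≠ 0)
  have hmul : ∀ x, ρ.mulVec x =
      ((p : ℂ) * (star (psiVec n) ⬝ᵥ x)) • psiVec n +
      (((1 - p : ℝ) : ℂ) * (star (ghzVec n) ⬝ᵥ x)) • ghzVec n := by
    intro x
    rw [hρ, Matrix.add_mulVec, Matrix.smul_mulVec, Matrix.smul_mulVec,
      vecMulVec_mulVec, vecMulVec_mulVec, smul_smul, smul_smul]
  refine ⟨?_, fun φ hφ hb => biproduct_span hn φ hφ hb, ?_⟩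
  · -- range = span
    apply le_antisymm
    · rintro y ⟨x, rfl⟩
      rw [Matrix.toLin'_apply, hmul]
      exact Submodule.add_mem _
        (Submodule.smul_mem _ _ (Submodule.subset_span (by simp)))
        (Submodule.smul_mem _ _ (Submodule.subset_span (by simp)))
    · rw [Submodule.span_le]
      rintro y hy
      rcases hy with rfl | rfl
      · exact ⟨(p : ℂ)⁻¹ • psiVec n, by
          rw [Matrix.toLin'_apply, hmul, dotProduct_smul, dotProduct_smul,
            dot_psi_psi hn, dot_ghz_psi hn]
          simp [hpC, mul_inv_cancel₀]⟩
      · exact ⟨((1 - p : ℝ) : ℂ)⁻¹ • ghzVec n, by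
          rw [Matrix.toLin'_apply, hmul, dotProduct_smul, dotProduct_smul,
            dot_psi_ghz hn, dot_ghz_ghz hn]
          have hqC' : 1 - (p : ℂ) ≠ 0 := by
            intro h; apply hqC; push_cast; exact h
          simp [smul_eq_mul, mul_inv_cancel₀ hqC']⟩
  · -- not biseparable
    rintro ⟨k, w, v, hw, hbp, hsum⟩
    -- every v j with nonzero weight is a multiple of psiVec
    have key : ∀ j, w j ≠ 0 → ∃ a : ℂ, v j = a • psiVec n := by
      intro j hj
      set c : ℂ := star (psiVec n) ⬝ᵥ v j with hc
      set d : ℂ := star (ghzVec n) ⬝ᵥ v j with hd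
      set u : (Fin n → Fin 2) → ℂ := v j - c • psiVec n - d • ghzVec n with hu
      have hpu : star (psiVec n) ⬝ᵥ u = 0 := by
        rw [hu, dotProduct_sub, dotProduct_sub, dotProduct_smul,
          dotProduct_smul, dot_psi_psi hn, dot_psi_ghz hn]
        simp [hc]
      have hgu : star (ghzVec n) ⬝ᵥ u = 0 := by
        rw [hu, dotProduct_sub, dotProduct_sub, dotProduct_smul,
          dotProduct_smul, dot_ghz_psi hn, dot_ghz_ghz hn]
        simp [hd]
      -- quadratic form at u vanishes
      have hQ : star u ⬝ᵥ ρ.mulVec u = 0 := by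
        rw [hmul u, dotProduct_add, dotProduct_smul, dotProduct_smul,
          hpu, hgu]
        simp
      -- quadratic form as a nonnegative sum
      have hQ2 : star u ⬝ᵥ ρ.mulVec u =
          ((∑ j', w j' * Complex.normSq (star (v j') ⬝ᵥ u) : ℝ) : ℂ) := by
        rw [hsum, sum_mulVec', dotProduct_sum']
        push_cast
        refine Finset.sum_congr rfl fun j' _ => ?_
        rw [Matrix.smul_mulVec, vecMulVec_mulVec, smul_smul,
          dotProduct_smul, smul_eq_mul]
        rw [dot_conj u (v j'), mul_assoc, Complex.mul_conj]
      have hreal : (∑ j', w j' * Complex.normSq (star (v j') ⬝ᵥ u)) = 0 := by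
        have := hQ2.symm.trans hQ
        exact_mod_cast this
      have hterm := (Finset.sum_eq_zero_iff_of_nonneg
        (fun j' _ => mul_nonneg (hw j') (Complex.normSq_nonneg _))).mp hreal j
        (Finset.mem_univ j)
      have hvu : star (v j) ⬝ᵥ u = 0 :=
        Complex.normSq_eq_zero.mp ((mul_eq_zero.mp hterm).resolve_left hj)
      have expand : star u = star (v j) - star c • star (psiVec n) - star d • star (ghzVec n) := by
        rw [hu, star_sub, star_sub, star_smul, star_smul]
      have huu : star u ⬝ᵥ u = 0 := by
        rw [expand, sub_dotProduct, sub_dotProduct, smul_dotProduct,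
          smul_dotProduct, hvu, hpu, hgu]
        simp
      have hu0 : u = 0 := eq_zero_of_star_dot_self u huu
      have hv : v j = c • psiVec n + d • ghzVec n := by
        have h' : v j - c • psiVec n - d • ghzVec n = 0 := by rw [← hu]; exact hu0
        rw [sub_sub] at h'
        exact sub_eq_zero.mp h'
      exact biproduct_span hn (v j)
        (Submodule.mem_span_pair.mpr ⟨c, d, hv.symm⟩) (hbp j)
    -- contradiction via the image of ghzVec
    have h1 : ρ.mulVec (ghzVec n) = ((1 - p : ℝ) : ℂ) • ghzVec n := by
      rw [hmul, dot_psi_ghz hn, dot_ghz_ghz hn]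
      simp
    have h2 : ρ.mulVec (ghzVec n) = 0 := by
      rw [hsum, sum_mulVec']
      refine Finset.sum_eq_zero fun j _ => ?_
      rw [Matrix.smul_mulVec, vecMulVec_mulVec]
      by_cases hj : w j = 0
      · simp [hj]
      · obtain ⟨a, ha⟩ := key j hj
        have hdot : star (v j) ⬝ᵥ ghzVec n = 0 := by
          rw [ha, star_smul, smul_dotProduct, dot_psi_ghz hn]
          simp
        rw [hdot]
        simp
    rw [h1] at h2
    exact smul_ne_zero hqC (ghz_ne_zero hn) h2

end Stmt5

end
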